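/- Let n > 1 be an odd integer. If a (K_2,K_{1,n})-URD(v;1,s) exists with s ≥ 1, then v is even, (n+1) divides v, and n divides v−2. -/

import Mathlib

/-- The edge set of the star with center `p.1` and leaf set `p.2`. -/
def starEdgeSet {V : Type*} [DecidableEq V] (p : V × Finset V) : Finset (Sym2 V) :=
  p.2.image (fun l => s(p.1, l))

/-- `P` is a family of vertex-disjoint `n`-stars (each given by a center and a set of
`n` leaves) whose vertex sets partition the whole vertex set. -/
def IsStarFactorFamily {V : Type*} [Fintype V] [DecidableEq V] (n : ℕ)
    (P : Finset (V × Finset V)) : Prop :=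
  (∀ p ∈ P, p.2.card = n ∧ p.1 ∉ p.2) ∧
  (∀ x : V, ∃! p, p ∈ P ∧ (x = p.1 ∨ x ∈ p.2))

/-- `E` is the edge set of a `K_{1,n}`-factor of the complete graph on `V`. -/
def IsStarFactor {V : Type*} [Fintype V] [DecidableEq V] (n : ℕ)
    (E : Finset (Sym2 V)) : Prop :=
  ∃ P : Finset (V × Finset V), IsStarFactorFamily n P ∧ E = P.biUnion starEdgeSet

/-- `E` is the edge set of a perfect matching (a `1`-factor, i.e. a `K_2`-factor). -/
def IsOneFactor {V : Type*} [Fintype V] [DecidableEq V] (E : Finset (Sym2 V)) : Prop :=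
  (∀ e ∈ E, ¬ e.IsDiag) ∧ ∀ x : V, ∃! e, e ∈ E ∧ x ∈ e

/-- A `(K_2, K_{1,n})`-URD`(v; r, s)`: a partition of the edge set of the complete graph
`K_v` into `r` classes that are `1`-factors and `s` classes that are `K_{1,n}`-factors. -/
def IsURD (n v r s : ℕ) : Prop :=
  ∃ (M : Fin r → Finset (Sym2 (Fin v))) (F : Fin s → Finset (Sym2 (Fin v))),
    (∀ i, IsOneFactor (M i)) ∧
    (∀ j, IsStarFactor n (F j)) ∧
    (∀ i j, i ≠ j → Disjoint (M i) (M j)) ∧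
    (∀ i j, i ≠ j → Disjoint (F i) (F j)) ∧
    (∀ i j, Disjoint (M i) (F j)) ∧
    (∀ e : Sym2 (Fin v),
      (e ∈ Finset.univ.biUnion M ∪ Finset.univ.biUnion F) ↔ ¬ e.IsDiag)

/-!
Count edges. A `1`-factor of `K_v` has `v / 2` edges, so `v` is even, and a `K_{1,n}`-factor is
the disjoint union of `v / (n + 1)` stars with `n` edges each, so `n + 1 ∣ v`. With one
`1`-factor and `s` star factors, `v (v - 1) / 2 = v / 2 + s n v / (n + 1)`, that is
`(n + 1)(v - 2) = 2 n s`; as `n` is coprime to `n + 1`, it divides `v - 2`.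
-/

open Finset

theorem Fintype.card_eq_card_mul_of_existsUnique {V α : Type*} [Fintype V] [DecidableEq V]
    {t : Finset α} {S : α → Finset V} {k : ℕ} (hS : ∀ a ∈ t, #(S a) = k)
    (hcover : ∀ x, ∃! a, a ∈ t ∧ x ∈ S a) : Fintype.card V = #t * k := by
  have huniv : (univ : Finset V) = t.biUnion S := by
    ext x
    simpa using (hcover x).exists
  have hdisj : (t : Set α).PairwiseDisjoint S := fun a ha b hb hab =>
    disjoint_left.2 fun x hxa hxb => hab ((hcover x).unique ⟨ha, hxa⟩ ⟨hb, hxb⟩)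
  rw [← card_univ, huniv, card_biUnion hdisj, sum_const_nat hS]

section

variable {V : Type*} [DecidableEq V]

theorem card_starEdgeSet (p : V × Finset V) : #(starEdgeSet p) = #p.2 :=
  card_image_of_injective _ fun _ _ => Sym2.congr_right.mp

theorem mem_of_mem_starEdgeSet {p : V × Finset V} {e : Sym2 V} (he : e ∈ starEdgeSet p)
    {x : V} (hx : x ∈ e) : x = p.1 ∨ x ∈ p.2 := by
  obtain ⟨l, hl, rfl⟩ := mem_image.mp he
  rcases Sym2.mem_iff.mp hx with rfl | rfl
  exacts [Or.inl rfl, Or.inr hl]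

variable [Fintype V]

theorem IsOneFactor.card_eq_two_mul {E : Finset (Sym2 V)} (h : IsOneFactor E) :
    Fintype.card V = 2 * #E := by
  rw [Fintype.card_eq_card_mul_of_existsUnique (S := Sym2.toFinset) (k := 2), mul_comm]
  · exact fun e he => Sym2.card_toFinset_of_not_isDiag e (h.1 e he)
  · simpa only [Sym2.mem_toFinset] using h.2

theorem IsOneFactor.even_card {E : Finset (Sym2 V)} (h : IsOneFactor E) :
    Even (Fintype.card V) :=
  h.card_eq_two_mul ▸ even_two_mul _

namespace IsStarFactorFamily

variable {n : ℕ} {P : Finset (V × Finset V)}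

theorem card_eq_card_mul (h : IsStarFactorFamily n P) : Fintype.card V = #P * (n + 1) := by
  refine Fintype.card_eq_card_mul_of_existsUnique (S := fun p => insert p.1 p.2) (fun p hp => ?_)
    ?_
  · rw [card_insert_of_notMem (h.1 p hp).2, (h.1 p hp).1]
  · simpa only [mem_insert] using h.2

theorem card_biUnion_starEdgeSet (h : IsStarFactorFamily n P) :
    #(P.biUnion starEdgeSet) = #P * n := by
  have hdisj : (P : Set (V × Finset V)).PairwiseDisjoint starEdgeSet := by
    refine fun p hp q hq hpq => disjoint_left.2 fun e hep heq => hpq ?_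
    have hx := Sym2.out_fst_mem e
    exact (h.2 _).unique ⟨hp, mem_of_mem_starEdgeSet hep hx⟩
      ⟨hq, mem_of_mem_starEdgeSet heq hx⟩
  rw [card_biUnion hdisj, sum_const_nat fun p hp => (card_starEdgeSet p).trans (h.1 p hp).1]

end IsStarFactorFamily

theorem IsStarFactor.succ_mul_card_eq {n : ℕ} {E : Finset (Sym2 V)} (h : IsStarFactor n E) :
    (n + 1) * #E = n * Fintype.card V := by
  obtain ⟨P, hP, rfl⟩ := h
  rw [hP.card_biUnion_starEdgeSet, hP.card_eq_card_mul]
  ring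

theorem IsStarFactor.succ_dvd_card {n : ℕ} {E : Finset (Sym2 V)} (h : IsStarFactor n E) :
    n + 1 ∣ Fintype.card V := by
  obtain ⟨P, hP, -⟩ := h
  exact hP.card_eq_card_mul ▸ dvd_mul_left _ _

end

theorem IsURD.even {n v r s : ℕ} (h : IsURD n v r s) (hr : 0 < r) : Even v := by
  obtain ⟨M, -, hM, -⟩ := h
  simpa using (hM ⟨0, hr⟩).even_card

theorem IsURD.succ_dvd {n v r s : ℕ} (h : IsURD n v r s) (hs : 0 < s) : n + 1 ∣ v := by
  obtain ⟨-, F, -, hF, -⟩ := h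
  simpa using (hF ⟨0, hs⟩).succ_dvd_card

theorem IsURD.card_edges {n v r s : ℕ} (h : IsURD n v r s) :
    (n + 1) * (2 * v.choose 2) = ((n + 1) * r + 2 * n * s) * v := by
  obtain ⟨M, F, hM, hF, hMM, hFF, hMF, hcover⟩ := h
  have hedges : v.choose 2 = ∑ i, #(M i) + ∑ j, #(F j) := by
    have hdisj : Disjoint (univ.biUnion M) (univ.biUnion F) :=
      (disjoint_biUnion_left _ _ _).2 fun i _ => (disjoint_biUnion_right _ _ _).2 fun j _ => hMF i j
    have hunion : univ.filter (fun e : Sym2 (Fin v) => ¬ e.IsDiag) =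
        univ.biUnion M ∪ univ.biUnion F := by
      ext e
      simpa using (hcover e).symm
    have hK := Sym2.card_subtype_not_diag (α := Fin v)
    rw [Fintype.card_fin, Fintype.card_subtype] at hK
    rw [← hK, hunion,
      card_union_of_disjoint hdisj, card_biUnion fun i _ j _ hij => hMM i j hij,
      card_biUnion fun i _ j _ hij => hFF i j hij]
  calc (n + 1) * (2 * v.choose 2)
      = (n + 1) * ∑ i, 2 * #(M i) + 2 * ∑ j, (n + 1) * #(F j) := by
        rw [hedges, ← mul_sum, ← mul_sum]
        ring
    _ = (n + 1) * ∑ _i : Fin r, v + 2 * ∑ _j : Fin s, n * v := by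
        simp only [← (hM _).card_eq_two_mul, (hF _).succ_mul_card_eq, Fintype.card_fin]
    _ = ((n + 1) * r + 2 * n * s) * v := by
        simp only [sum_const, card_univ, Fintype.card_fin, smul_eq_mul]
        ring

theorem IsURD.succ_mul_sub_one {n v r s : ℕ} (h : IsURD n v r s) (hv : 0 < v) :
    (n + 1) * (v - 1) = (n + 1) * r + 2 * n * s := by
  have htwo : 2 * v.choose 2 = v * (v - 1) := by
    rw [Nat.choose_two_right, Nat.mul_div_cancel' (Nat.even_mul_pred_self v).two_dvd]
  refine Nat.eq_of_mul_eq_mul_right hv ?_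
  rw [← h.card_edges, htwo]
  ring

theorem divisibility_conditions_general (n : ℕ)
    (v s : ℕ) (hs : 1 ≤ s) (h : IsURD n v 1 s) :
    Even v ∧ (n + 1) ∣ v ∧ n ∣ (v - 2) := by
  refine ⟨h.even one_pos, h.succ_dvd hs, ?_⟩
  rcases Nat.eq_zero_or_pos v with rfl | hv
  · simp
  have hcount : (n + 1) * (v - 2) = n * (2 * s) := by
    rw [show v - 2 = v - 1 - 1 by omega, Nat.mul_sub_one, h.succ_mul_sub_one hv, mul_one,
      Nat.add_sub_cancel_left]
    ring
  have hcop : Nat.Coprime n (n + 1) := Nat.coprime_self_add_right.2 (Nat.coprime_one_right n)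
  exact hcop.dvd_of_dvd_mul_left (hcount ▸ dvd_mul_right n _)

/-- For odd `n > 1`, if a `(K_2, K_{1,n})`-URD`(v; 1, s)` exists with `s ≥ 1`, then
`v` is even, `n + 1` divides `v`, and `n` divides `v - 2`. -/
theorem divisibility_conditions (n : ℕ) (hn : 1 < n) (hodd : Odd n)
    (v s : ℕ) (hv : 0 < v) (hs : 1 ≤ s) (h : IsURD n v 1 s) :
    Even v ∧ (n + 1) ∣ v ∧ n ∣ (v - 2) :=
  divisibility_conditions_general n v s hs h
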